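/- arXiv:2604.15220 — 2 statements merged into one kernel-verified Lean document; each statement's English description precedes it below -/
import Mathlib

section
/- Let M = [[-a, bᵀ],[c, D]] with a > 0, D = diag(-d_1,...,-d_n), d_j > 0, and suppose b_j c_j ≤ 0 for all j and Σ_j |b_j c_j|/d_j < a. Then every eigenvalue λ of M satisfies Re(λ) < 0. -/
open Matrix

/-- Stability of M = [[-a, bᵀ],[c, diag(-d)]] when b_j c_j ≤ 0 and
Σ_j |b_j c_j|/d_j < a: every (complex) eigenvalue has negative real part. -/
theorem bordered_matrix_stable (n : ℕ) (a : ℝ) (ha : 0 < a)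
    (b c d : Fin n → ℝ) (hd : ∀ j, 0 < d j)
    (hbc : ∀ j, b j * c j ≤ 0)
    (hsum : ∑ j, |b j * c j| / d j < a)
    (M : Matrix (Fin (n + 1)) (Fin (n + 1)) ℝ)
    (hM : M = Matrix.of (fun i j =>
      Fin.cases
        (Fin.cases (-a) (fun j' => b j') j)
        (fun i' => Fin.cases (c i') (fun j' => if i' = j' then -d i' else 0) j) i)) :
    ∀ lam : ℂ, (M.map (fun x : ℝ => (x : ℂ))).charpoly.eval lam = 0 → lam.re < 0 := by
  intro lam hlam
  by_contra hre
  push_neg at hre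
  set P : Matrix (Fin (n+1)) (Fin (n+1)) ℂ := M.map (fun x : ℝ => (x : ℂ)) with hP
  -- charpoly eval = det (diag lam - P)
  have hdet : ((Matrix.diagonal fun _ => lam) - P).det = 0 := by
    rw [← hlam, Matrix.charpoly, ← Polynomial.coe_evalRingHom, RingHom.map_det]
    congr 1
    ext i j
    by_cases h : i = j <;> simp [charmatrix_apply, Matrix.diagonal_apply, h]
  obtain ⟨v, hv0, hv⟩ := Matrix.exists_mulVec_eq_zero_iff.2 hdet
  have hv' : ∀ i, lam * v i - P.mulVec v i = 0 := by
    intro i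
    have := congrFun hv i
    simpa [Matrix.sub_mulVec, Matrix.mulVec_diagonal] using this
  -- entries of P
  have hP0 : ∀ j : Fin n, P 0 j.succ = (b j : ℂ) := by
    intro j; simp [hP, hM, Matrix.map_apply]
  have hP00 : P 0 0 = (-a : ℝ) := by simp [hP, hM, Matrix.map_apply]
  have hPi0 : ∀ i : Fin n, P i.succ 0 = (c i : ℂ) := by
    intro i; simp [hP, hM, Matrix.map_apply]
  have hPij : ∀ i j : Fin n, P i.succ j.succ = if i = j then (-d i : ℂ) else 0 := by
    intro i j
    by_cases h : i = j <;> simp [hP, hM, Matrix.map_apply, h]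
  -- row equations
  have row0 : lam * v 0 = (-a : ℂ) * v 0 + ∑ j : Fin n, (b j : ℂ) * v j.succ := by
    have := hv' 0
    rw [sub_eq_zero] at this
    rw [this, Matrix.mulVec, dotProduct, Fin.sum_univ_succ, hP00]
    push_cast
    congr 1
    exact Finset.sum_congr rfl fun j _ => by rw [hP0]
  have rowi : ∀ i : Fin n, lam * v i.succ = (c i : ℂ) * v 0 - (d i : ℂ) * v i.succ := by
    intro i
    have := hv' i.succ
    rw [sub_eq_zero] at this
    rw [this, Matrix.mulVec, dotProduct, Fin.sum_univ_succ, hPi0]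
    congr 1
    rw [Finset.sum_congr rfl fun j _ => by rw [hPij]]
    simp [ite_mul, Finset.sum_ite_eq]
    ring
  -- lam + d i ≠ 0
  have hld : ∀ i : Fin n, lam + (d i : ℂ) ≠ 0 := by
    intro i h
    have : lam.re + d i = 0 := by
      have := congrArg Complex.re h; simpa using this
    linarith [hd i, hre]
  have hvi : ∀ i : Fin n, v i.succ = (c i : ℂ) * v 0 / (lam + d i) := by
    intro i
    rw [eq_div_iff (hld i)]
    have := rowi i
    ring_nf
    ring_nf at this
    linear_combination this
  -- v 0 ≠ 0
  have hv00 : v 0 ≠ 0 := by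
    intro h0
    apply hv0
    funext i
    refine Fin.cases ?_ (fun i => ?_) i
    · simpa using h0
    · simp only [Pi.zero_apply]
      rw [hvi i, h0, mul_zero, zero_div]
  -- main equation
  have key : lam + (a : ℂ) = ∑ j : Fin n, (b j * c j : ℝ) / (lam + d j) := by
    have h1 : (lam + a) * v 0 = (∑ j : Fin n, ((b j * c j : ℝ) : ℂ) / (lam + d j)) * v 0 := by
      rw [Finset.sum_mul]
      have : (lam + a) * v 0 = ∑ j : Fin n, (b j : ℂ) * v j.succ := by
        linear_combination row0
      rw [this]
      refine Finset.sum_congr rfl fun j _ => ?_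
      rw [hvi j]
      push_cast
      field_simp
    exact mul_right_cancel₀ hv00 h1
  -- take real parts
  have hrekey := congrArg Complex.re key
  rw [Complex.add_re, Complex.ofReal_re, Complex.re_sum] at hrekey
  have hterm : ∀ j : Fin n, (((b j * c j : ℝ) : ℂ) / (lam + d j)).re ≤ 0 := by
    intro j
    have hns : 0 < Complex.normSq (lam + d j) := by
      rw [Complex.normSq_pos]; exact hld j
    rw [Complex.div_re]
    have him : ((b j * c j : ℝ) : ℂ).im = 0 := by simp
    rw [him]
    simp only [zero_mul, zero_div, add_zero]
    have hre' : 0 < (lam + (d j : ℂ)).re := by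
      simp only [Complex.add_re, Complex.ofReal_re]
      linarith [hd j, hre]
    have : ((b j * c j : ℝ) : ℂ).re * (lam + (d j : ℂ)).re ≤ 0 := by
      rw [Complex.ofReal_re]
      exact mul_nonpos_of_nonpos_of_nonneg (hbc j) hre'.le
    exact div_nonpos_of_nonpos_of_nonneg this hns.le
  have hsum0 : ∑ j : Fin n, (((b j * c j : ℝ) : ℂ) / (lam + d j)).re ≤ 0 :=
    Finset.sum_nonpos fun j _ => hterm j
  linarith [hrekey ▸ hsum0]
end

section
/- Fix a > 0, e₁⁰, e₂⁰ > 0 and b₁c₁ < 0, b₂c₂ < 0. Define α₂(ε) = a + ε e₁⁰ + ε e₂⁰, α₁(ε) = aε(e₁⁰+e₂⁰) + ε²e₁⁰e₂⁰ - b₁c₁ - b₂c₂, α₀(ε) = a ε² e₁⁰e₂⁰ - ε(b₁c₁ e₂⁰ + b₂c₂ e₁⁰). Then there exists ε₀ > 0 such that for all 0 < ε < ε₀ the Routh–Hurwitz conditions α₂ > 0, α₀ > 0, α₁α₂ > α₀ hold. -/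
/-- Slow sentiment adjustment: scaling the decay rates e₁ = ε e₁⁰, e₂ = ε e₂⁰,
the Routh–Hurwitz conditions hold for all sufficiently small ε > 0. -/
theorem slow_adjustment_stability (a e₁0 e₂0 b₁ b₂ c₁ c₂ : ℝ)
    (ha : 0 < a) (he₁ : 0 < e₁0) (he₂ : 0 < e₂0)
    (h1 : b₁ * c₁ < 0) (h2 : b₂ * c₂ < 0) :
    ∃ ε₀ > 0, ∀ ε : ℝ, 0 < ε → ε < ε₀ →
      (0 < a + ε * e₁0 + ε * e₂0) ∧
      (0 < a * ε ^ 2 * (e₁0 * e₂0) - ε * (b₁ * c₁ * e₂0 + b₂ * c₂ * e₁0)) ∧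
      (a * ε ^ 2 * (e₁0 * e₂0) - ε * (b₁ * c₁ * e₂0 + b₂ * c₂ * e₁0) <
        (a * ε * (e₁0 + e₂0) + ε ^ 2 * (e₁0 * e₂0) - b₁ * c₁ - b₂ * c₂) *
          (a + ε * e₁0 + ε * e₂0)) := by
  have hPpos : 0 < e₁0 * e₂0 := mul_pos he₁ he₂
  have hQneg : b₁ * c₁ * e₂0 + b₂ * c₂ * e₁0 < 0 := by
    have := mul_neg_of_neg_of_pos h1 he₂
    have := mul_neg_of_neg_of_pos h2 he₁
    linarith
  have hKpos : 0 < -(b₁ * c₁ + b₂ * c₂) := by linarith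
  have hD : 0 < a * (e₁0 * e₂0) - (b₁ * c₁ * e₂0 + b₂ * c₂ * e₁0) := by nlinarith
  refine ⟨min 1 (a * -(b₁ * c₁ + b₂ * c₂) /
      (a * (e₁0 * e₂0) - (b₁ * c₁ * e₂0 + b₂ * c₂ * e₁0))),
    lt_min one_pos (div_pos (mul_pos ha hKpos) hD), ?_⟩
  intro ε hε hεlt
  have hε1 : ε < 1 := lt_of_lt_of_le hεlt (min_le_left _ _)
  have hε2 := lt_of_lt_of_le hεlt (min_le_right _ _)
  have hεD : ε * (a * (e₁0 * e₂0) - (b₁ * c₁ * e₂0 + b₂ * c₂ * e₁0)) <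
      a * -(b₁ * c₁ + b₂ * c₂) := (lt_div_iff₀ hD).mp hε2
  have hα₂ : 0 < a + ε * e₁0 + ε * e₂0 := by
    have := mul_pos hε he₁; have := mul_pos hε he₂; linarith
  have hα₀ : 0 < a * ε ^ 2 * (e₁0 * e₂0) - ε * (b₁ * c₁ * e₂0 + b₂ * c₂ * e₁0) := by
    have h3 : 0 < a * ε ^ 2 * (e₁0 * e₂0) := by positivity
    nlinarith [mul_pos hε (neg_pos.mpr hQneg)]
  refine ⟨hα₂, hα₀, ?_⟩
  -- α₀ < a*K
  have hstep : a * ε ^ 2 * (e₁0 * e₂0) - ε * (b₁ * c₁ * e₂0 + b₂ * c₂ * e₁0) <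
      a * -(b₁ * c₁ + b₂ * c₂) := by
    nlinarith [mul_pos (mul_pos ha (mul_pos hε (sub_pos.2 hε1))) hPpos]
  -- a*K ≤ α₁ * α₂
  have hα₁ : -(b₁ * c₁ + b₂ * c₂) ≤
      a * ε * (e₁0 + e₂0) + ε ^ 2 * (e₁0 * e₂0) - b₁ * c₁ - b₂ * c₂ := by
    have h4 : 0 < a * ε * (e₁0 + e₂0) := by positivity
    have h5 : 0 < ε ^ 2 * (e₁0 * e₂0) := by positivity
    linarith
  have hα₂a : a ≤ a + ε * e₁0 + ε * e₂0 := by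
    have := mul_pos hε he₁; have := mul_pos hε he₂; linarith
  have hprod : -(b₁ * c₁ + b₂ * c₂) * a ≤
      (a * ε * (e₁0 + e₂0) + ε ^ 2 * (e₁0 * e₂0) - b₁ * c₁ - b₂ * c₂) *
        (a + ε * e₁0 + ε * e₂0) :=
    mul_le_mul hα₁ hα₂a ha.le (by linarith)
  nlinarith
end
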